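/- Let η ∈ C¹(ℝ²) with η = 1 on B_{3/4}, η = 0 outside B₁, and ‖∇η‖_∞ ≤ C₀. For u : Λ → ℝ with Du ∈ ℓ²(B) define the truncation Π_R u(ξ) = η(ξ/R)(u(ξ) − a_R), where a_R is the average of the P1 interpolant of u over the annulus A_R = B_R \ B_{R/2+1}. Then supp(D(Π_R u − u restricted to B_{R/2})) is contained in bonds meeting ℝ² \ B_{R/2}, and ‖DΠ_R u − Du‖_{ℓ²(B)} ≤ γ ‖Du‖_{ℓ²(B \ B_{R/2})} with γ independent of R and u. -/

import Mathlib

/-!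
By the product rule, the bond difference of `Π_R u - u` across `(ξ, ξ')` is
`(η(ξ'/R) - 1) Du(ξ, ξ') + (η(ξ'/R) - η(ξ/R)) (u(ξ) - a)`. The first term vanishes on bonds inside
`B_{R/2}` and is bounded by `|Du|`; the second is at most `C₀ R⁻¹ |u(ξ) - a|` and vanishes unless
`3R/4 - 1 ≤ |ξ| ≤ R + 1`. So everything reduces to a Poincaré inequality on that annulus:
`∑ |u - a|² ≲ R² ‖Du‖²` with the energy taken over bonds outside `B_{R/2}`.

For it, use lattice coordinates. The hexagonal rings `hexNorm = k` for `6R/5 + 3 ≤ k < 6R/5 + 3 + R`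
lie outside `B_{R/2}` and are disjoint, so one of them carries energy at most `‖Du‖² / R`; let `a`
be the value of `u` at a point of that ring. Every annulus point reaches the ring along an outward
lattice ray of length `≤ k ≲ R` that stays outside `B_{R/2}`, and then runs along the ring
(`6k` bonds). Cauchy–Schwarz along these paths, the bound `≲ R²` on the number of annulus points,
and the fact that a bond lies on at most `k` of the rays give the estimate.
-/

noncomputable section
open Real Metric

abbrev E2 := EuclideanSpace ℝ (Fin 2)

def la1 : E2 := !₂[1, 0]
def la2 : E2 := !₂[1/2, Real.sqrt 3 / 2]

def TriLat : Set E2 :=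
  {x | ∃ m n : ℤ, x = (3 : ℝ)⁻¹ • (la1 + la2) + m • la1 + n • la2}

def Bonds : Set (E2 × E2) :=
  {p | p.1 ∈ TriLat ∧ p.2 ∈ TriLat ∧ ‖p.2 - p.1‖ = 1}

/-- Bonds lying outside the ball B_{R/2}. -/
def OuterBonds (R : ℝ) : Set (E2 × E2) :=
  {p ∈ Bonds | p.1 ∉ ball (0 : E2) (R / 2) ∨ p.2 ∉ ball (0 : E2) (R / 2)}

lemma sq_sub_le_mul_sum_sq_of_le (f : ℕ → ℝ) {n N : ℕ} (h : n ≤ N) :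
    (f n - f 0) ^ 2 ≤ N * ∑ t ∈ Finset.range N, (f (t + 1) - f t) ^ 2 := by
  have hcs :=
    sq_sum_le_card_mul_sum_sq (s := Finset.range n) (f := fun t => f (t + 1) - f t)
  rw [Finset.sum_range_sub, Finset.card_range] at hcs
  refine hcs.trans (mul_le_mul (by exact_mod_cast h) ?_ (by positivity) (by positivity))
  exact Finset.sum_le_sum_of_subset_of_nonneg (Finset.range_subset_range.mpr h)
    (fun _ _ _ => sq_nonneg _)

lemma sum_comp_le_mul_sum_image {ι κ : Type*} [DecidableEq κ] (s : Finset ι) (g : ι → κ)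
    {f : κ → ℝ} (hf : ∀ b, 0 ≤ f b) {m : ℕ}
    (hm : ∀ b, (s.filter (g · = b)).card ≤ m) :
    ∑ a ∈ s, f (g a) ≤ m * ∑ b ∈ s.image g, f b := by
  rw [Finset.sum_comp, Finset.mul_sum]
  gcongr with b
  rw [nsmul_eq_mul]
  exact mul_le_mul_of_nonneg_right (by exact_mod_cast hm b) (hf b)

lemma sum_indicator_le_tsum_subtype {α : Type*} {s : Set α} {f : α → ℝ} (hf : ∀ x, 0 ≤ f x)
    (hs : Summable fun x : s => f x) (F : Finset α) :
    ∑ x ∈ F, s.indicator f x ≤ ∑' x : s, f x := by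
  rw [tsum_subtype]
  exact (summable_subtype_iff_indicator.mp hs).sum_le_tsum F
    fun x _ => Set.indicator_nonneg (fun x _ => hf x) x

section Cutoff

variable {E : Type*} [NormedAddCommGroup E] {η : E → ℝ} {C₀ R : ℝ}

lemma cutoff_smul_eq_one [NormedSpace ℝ E] (hη1 : ∀ x ∈ ball (0 : E) (3 / 4), η x = 1)
    (hR : 0 < R) {x : E} (hx : ‖x‖ < 3 * R / 4) : η (R⁻¹ • x) = 1 := by
  refine hη1 _ ?_
  rw [mem_ball_zero_iff, norm_smul, norm_inv, Real.norm_of_nonneg hR.le, inv_mul_lt_iff₀ hR]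
  linarith

lemma cutoff_smul_eq_zero [NormedSpace ℝ E] (hη0 : ∀ x : E, x ∉ ball (0 : E) 1 → η x = 0)
    (hR : 0 < R) {x : E} (hx : R ≤ ‖x‖) : η (R⁻¹ • x) = 0 := by
  refine hη0 _ ?_
  rw [mem_ball_zero_iff, norm_smul, norm_inv, Real.norm_of_nonneg hR.le, not_lt,
    le_inv_mul_iff₀ hR]
  linarith

lemma abs_cutoff_sub_one_le (hlip : ∀ x y : E, |η x - η y| ≤ C₀ * ‖x - y‖) (h₀ : η 0 = 1)
    (hη0 : ∀ x : E, x ∉ ball (0 : E) 1 → η x = 0) (x : E) : |η x - 1| ≤ max 1 C₀ := by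
  by_cases hx : x ∈ ball (0 : E) 1
  · have h := hlip x 0
    rw [h₀, sub_zero] at h
    refine h.trans ?_
    rcases le_total 0 C₀ with hC | hC
    · exact (mul_le_of_le_one_right hC (mem_ball_zero_iff.mp hx).le).trans (le_max_right _ _)
    · exact (mul_nonpos_of_nonpos_of_nonneg hC (norm_nonneg x)).trans
        (zero_le_one.trans (le_max_left _ _))
  · simp [hη0 x hx]

lemma abs_cutoff_smul_sub_le [NormedSpace ℝ E] (hlip : ∀ x y : E, |η x - η y| ≤ C₀ * ‖x - y‖)
    (hR : 0 < R) (x y : E) : |η (R⁻¹ • y) - η (R⁻¹ • x)| ≤ C₀ / R * ‖y - x‖ := by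
  have h := hlip (R⁻¹ • y) (R⁻¹ • x)
  rwa [← smul_sub, norm_smul, norm_inv, Real.norm_of_nonneg hR.le, ← mul_assoc,
    ← div_eq_mul_inv] at h

end Cutoff

/-- `‖Du‖²_{ℓ²(s)}`. -/
def bondEnergy (u : E2 → ℝ) (s : Set (E2 × E2)) : ℝ :=
  ∑' b : s, (u (b : E2 × E2).2 - u (b : E2 × E2).1) ^ 2

lemma bondEnergy_nonneg (u : E2 → ℝ) (s : Set (E2 × E2)) : 0 ≤ bondEnergy u s :=
  tsum_nonneg fun _ => sq_nonneg _

lemma sum_indicator_le_bondEnergy {u : E2 → ℝ} {s : Set (E2 × E2)}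
    (hs : Summable fun b : s => (u (b : E2 × E2).2 - u (b : E2 × E2).1) ^ 2)
    (F : Finset (E2 × E2)) :
    ∑ p ∈ F, s.indicator (fun p => (u p.2 - u p.1) ^ 2) p ≤ bondEnergy u s :=
  sum_indicator_le_tsum_subtype (f := fun p : E2 × E2 => (u p.2 - u p.1) ^ 2)
    (fun _ => sq_nonneg _) hs F

lemma sum_le_bondEnergy {u : E2 → ℝ} {s : Set (E2 × E2)}
    (hs : Summable fun b : s => (u (b : E2 × E2).2 - u (b : E2 × E2).1) ^ 2)
    (F : Finset (E2 × E2)) (hF : ∀ p ∈ F, p ∈ s) :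
    ∑ p ∈ F, (u p.2 - u p.1) ^ 2 ≤ bondEnergy u s := by
  calc ∑ p ∈ F, (u p.2 - u p.1) ^ 2
      = ∑ p ∈ F, s.indicator (fun p => (u p.2 - u p.1) ^ 2) p :=
        Finset.sum_congr rfl fun p hp => by rw [Set.indicator_of_mem (hF p hp)]
    _ ≤ bondEnergy u s := sum_indicator_le_bondEnergy hs F

lemma mem_OuterBonds_of_le_norm {R : ℝ} {p : E2 × E2} (hp : p ∈ Bonds) (h : R / 2 ≤ ‖p.1‖) :
    p ∈ OuterBonds R :=
  ⟨hp, Or.inl (by simpa using h)⟩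

namespace TriangularLattice

def vec (z : ℤ × ℤ) : E2 := (z.1 : ℝ) • la1 + (z.2 : ℝ) • la2

def pt (z : ℤ × ℤ) : E2 := (3 : ℝ)⁻¹ • (la1 + la2) + vec z

def qform (z : ℤ × ℤ) : ℤ := z.1 ^ 2 + z.1 * z.2 + z.2 ^ 2

/-- The graph distance from `pt 0` to `pt z` in the lattice; its level sets are hexagons. -/
def hexNorm (z : ℤ × ℤ) : ℤ := max |z.1| (max |z.2| |z.1 + z.2|)

def unitSteps : Finset (ℤ × ℤ) := {(1, 0), (-1, 0), (0, 1), (0, -1), (1, -1), (-1, 1)}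

lemma inner_la1_la1 : inner ℝ la1 la1 = 1 := by
  rw [PiLp.inner_apply]; simp [la1, Fin.sum_univ_two]

lemma inner_la1_la2 : inner ℝ la1 la2 = 1 / 2 := by
  rw [PiLp.inner_apply]; simp [la1, la2, Fin.sum_univ_two]

lemma inner_la2_la2 : inner ℝ la2 la2 = 1 := by
  rw [PiLp.inner_apply]; simp [la2, Fin.sum_univ_two]
  nlinarith [Real.mul_self_sqrt (show (0 : ℝ) ≤ 3 by norm_num)]

lemma norm_sq_smul_la1_add_smul_la2 (x y : ℝ) :
    ‖x • la1 + y • la2‖ ^ 2 = x ^ 2 + x * y + y ^ 2 := by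
  rw [← real_inner_self_eq_norm_sq]
  simp only [inner_add_add_self, real_inner_smul_left, real_inner_smul_right, inner_la1_la1,
    inner_la1_la2, real_inner_comm la1 la2, inner_la2_la2]
  ring

lemma norm_vec_sq (z : ℤ × ℤ) : ‖vec z‖ ^ 2 = qform z := by
  rw [vec, norm_sq_smul_la1_add_smul_la2]
  push_cast [qform]
  ring

lemma norm_pt_sq (z : ℤ × ℤ) : ‖pt z‖ ^ 2 = qform z + z.1 + z.2 + 1 / 3 := by
  have h : pt z = ((z.1 : ℝ) + 3⁻¹) • la1 + ((z.2 : ℝ) + 3⁻¹) • la2 := by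
    simp only [pt, vec]; module
  rw [h, norm_sq_smul_la1_add_smul_la2]
  push_cast [qform]
  ring

lemma pt_sub_pt (z w : ℤ × ℤ) : pt z - pt w = vec (z - w) := by
  simp only [pt, vec, Prod.fst_sub, Prod.snd_sub, Int.cast_sub]
  module

lemma qform_eq_zero_iff {z : ℤ × ℤ} : qform z = 0 ↔ z = 0 := by
  refine ⟨fun h => ?_, fun h => by simp [h, qform]⟩
  have h4 : (2 * z.1 + z.2) ^ 2 + 3 * z.2 ^ 2 = 0 := by unfold qform at h; linear_combination 4 * h
  have h2 : z.2 = 0 := by nlinarith [sq_nonneg (2 * z.1 + z.2), sq_nonneg z.2]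
  rw [h2] at h4
  exact Prod.ext (by simpa using h4) h2

lemma qform_eq_of_norm_vec {z : ℤ × ℤ} {r : ℤ} (h : ‖vec z‖ ^ 2 = r) : qform z = r := by
  rw [norm_vec_sq] at h
  exact_mod_cast h

lemma pt_injective : Function.Injective pt := fun z w h =>
  sub_eq_zero.mp <| qform_eq_zero_iff.mp <| qform_eq_of_norm_vec <| by simp [← pt_sub_pt, h]

lemma qform_eq_one_iff {e : ℤ × ℤ} : qform e = 1 ↔ e ∈ unitSteps := by
  rcases e with ⟨m, n⟩
  simp only [qform, unitSteps, Finset.mem_insert, Finset.mem_singleton, Prod.mk.injEq]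
  constructor
  · intro h
    have hn : -1 ≤ n ∧ n ≤ 1 := by constructor <;> nlinarith [sq_nonneg (2 * m + n)]
    have hm : -1 ≤ m ∧ m ≤ 1 := by constructor <;> nlinarith [sq_nonneg (m + 2 * n)]
    rcases hn with ⟨hn1, hn2⟩
    rcases hm with ⟨hm1, hm2⟩
    interval_cases m <;> interval_cases n <;> simp_all
  · rintro (h | h | h | h | h | h) <;> rcases h with ⟨rfl, rfl⟩ <;> rfl

lemma norm_vec_of_mem_unitSteps {e : ℤ × ℤ} (he : e ∈ unitSteps) : ‖vec e‖ = 1 := by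
  have h := norm_vec_sq e
  rw [qform_eq_one_iff.mpr he, Int.cast_one] at h
  nlinarith [norm_nonneg (vec e)]

lemma range_pt : Set.range pt = TriLat := by
  ext x
  simp only [Set.mem_range, TriLat, Set.mem_ofPred_eq, pt, vec, Prod.exists,
    ← Int.cast_smul_eq_zsmul ℝ]
  constructor
  · rintro ⟨m, n, rfl⟩; exact ⟨m, n, by abel⟩
  · rintro ⟨m, n, rfl⟩; exact ⟨m, n, by abel⟩

lemma pt_pt_add_mem_Bonds (z : ℤ × ℤ) {e : ℤ × ℤ} (he : e ∈ unitSteps) :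
    (pt z, pt (z + e)) ∈ Bonds :=
  ⟨range_pt ▸ ⟨z, rfl⟩, range_pt ▸ ⟨z + e, rfl⟩,
    by simpa [pt_sub_pt] using norm_vec_of_mem_unitSteps he⟩

lemma exists_eq_pt_pt_add_of_mem_Bonds {p : E2 × E2} (hp : p ∈ Bonds) :
    ∃ z, ∃ e ∈ unitSteps, p = (pt z, pt (z + e)) := by
  obtain ⟨h1, h2, hlen⟩ := hp
  obtain ⟨z, hz⟩ : p.1 ∈ Set.range pt := range_pt ▸ h1
  obtain ⟨w, hw⟩ : p.2 ∈ Set.range pt := range_pt ▸ h2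
  refine ⟨z, w - z, qform_eq_one_iff.mp (qform_eq_of_norm_vec ?_), by rw [add_sub_cancel, hz, hw]⟩
  rw [← pt_sub_pt, hz, hw, hlen]
  norm_num

lemma abs_le_hexNorm (z : ℤ × ℤ) :
    |z.1| ≤ hexNorm z ∧ |z.2| ≤ hexNorm z ∧ |z.1 + z.2| ≤ hexNorm z := by
  simp only [hexNorm]; omega

lemma hexNorm_eq_abs (z : ℤ × ℤ) :
    hexNorm z = |z.1| ∨ hexNorm z = |z.2| ∨ hexNorm z = |z.1 + z.2| := by
  simp only [hexNorm]; omega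

lemma qform_le_hexNorm_sq (z : ℤ × ℤ) : qform z ≤ hexNorm z ^ 2 := by
  obtain ⟨h1, h2, h3⟩ := abs_le_hexNorm z
  have s1 := sq_le_sq' (abs_le.mp h1).1 (abs_le.mp h1).2
  have s2 := sq_le_sq' (abs_le.mp h2).1 (abs_le.mp h2).2
  have s3 := sq_le_sq' (abs_le.mp h3).1 (abs_le.mp h3).2
  unfold qform
  rcases le_total 0 (z.1 * z.2) with h | h
  · nlinarith
  · rcases le_total 0 (z.2 * (z.1 + z.2)) with h' | h' <;> nlinarith

lemma three_mul_hexNorm_sq_le (z : ℤ × ℤ) : 3 * hexNorm z ^ 2 ≤ 4 * qform z := by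
  unfold qform
  rcases hexNorm_eq_abs z with h | h | h <;> rw [h, sq_abs]
  · nlinarith [sq_nonneg (z.1 + 2 * z.2)]
  · nlinarith [sq_nonneg (2 * z.1 + z.2)]
  · nlinarith [sq_nonneg (z.1 - z.2)]

lemma norm_pt_zero_le : ‖pt 0‖ ≤ 3 / 5 := by
  have h := norm_pt_sq 0
  simp only [qform, Prod.fst_zero, Prod.snd_zero] at h
  nlinarith [norm_nonneg (pt 0)]

lemma norm_vec_le_norm_pt (z : ℤ × ℤ) : ‖vec z‖ ≤ ‖pt z‖ + 3 / 5 := by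
  have := norm_sub_le (pt z) (pt 0)
  rw [pt_sub_pt, sub_zero] at this
  linarith [norm_pt_zero_le]

lemma hexNorm_nonneg (z : ℤ × ℤ) : 0 ≤ hexNorm z :=
  (abs_nonneg _).trans (abs_le_hexNorm z).1

lemma norm_pt_le_hexNorm (z : ℤ × ℤ) : ‖pt z‖ ≤ hexNorm z + 3 / 5 := by
  have hsq : ‖vec z‖ ^ 2 ≤ (hexNorm z : ℝ) ^ 2 := by
    rw [norm_vec_sq]; exact_mod_cast qform_le_hexNorm_sq z
  have hvec : ‖vec z‖ ≤ hexNorm z :=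
    (pow_le_pow_iff_left₀ (norm_nonneg _) (by exact_mod_cast hexNorm_nonneg z) two_ne_zero).mp hsq
  have e : pt z = pt 0 + vec z := by simpa using sub_eq_iff_eq_add'.mp (pt_sub_pt z 0)
  linarith [norm_pt_zero_le, e ▸ norm_add_le (pt 0) (vec z)]

lemma three_mul_hexNorm_sq_le_norm_pt (z : ℤ × ℤ) :
    3 * (hexNorm z : ℝ) ^ 2 ≤ 4 * (‖pt z‖ + 3 / 5) ^ 2 := by
  have h : 3 * (hexNorm z : ℝ) ^ 2 ≤ 4 * ‖vec z‖ ^ 2 := by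
    rw [norm_vec_sq]; exact_mod_cast three_mul_hexNorm_sq_le z
  have := norm_vec_le_norm_pt z
  nlinarith [norm_nonneg (vec z)]

/-- The hexagon `hexNorm = k`, traversed counterclockwise from `(k, 0)` in `6 k` unit steps. -/
def hexRing (k i : ℕ) : ℤ × ℤ :=
  if i < k then ((k : ℤ) - i, i)
  else if i < 2 * k then ((k : ℤ) - i, k)
  else if i < 3 * k then (-k, 3 * (k : ℤ) - i)
  else if i < 4 * k then ((i : ℤ) - 4 * k, 3 * (k : ℤ) - i)
  else if i < 5 * k then ((i : ℤ) - 4 * k, -k)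
  else (k, (i : ℤ) - 6 * k)

lemma hexNorm_hexRing {k i : ℕ} (hi : i ≤ 6 * k) : hexNorm (hexRing k i) = k := by
  simp only [hexNorm, hexRing, abs]
  split_ifs <;> omega

lemma hexRing_succ_sub_mem_unitSteps {k i : ℕ} (hi : i < 6 * k) :
    hexRing k (i + 1) - hexRing k i ∈ unitSteps := by
  simp only [unitSteps, Finset.mem_insert, Finset.mem_singleton, hexRing, Prod.ext_iff]
  split_ifs <;> simp only [Prod.fst_sub, Prod.snd_sub] <;> omega

lemma hexRing_injOn {k i j : ℕ} (hi : i < 6 * k) (hj : j < 6 * k)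
    (h : hexRing k i = hexRing k j) : i = j := by
  simp only [hexRing, Prod.ext_iff] at h
  split_ifs at h <;> omega

lemma exists_hexRing_eq {k : ℕ} {z : ℤ × ℤ} (hk : 1 ≤ k) (h : hexNorm z = k) :
    ∃ i < 6 * k, hexRing k i = z := by
  rcases z with ⟨m, n⟩
  simp only [hexNorm, abs] at h
  by_cases c1 : 1 ≤ m ∧ 0 ≤ n
  · exact ⟨n.toNat, by omega, by simp only [hexRing, Prod.ext_iff]; split_ifs <;> omega⟩
  by_cases c2 : m ≤ 0 ∧ 1 ≤ n ∧ 1 ≤ m + n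
  · exact ⟨(2 * k - n - m).toNat, by omega,
      by simp only [hexRing, Prod.ext_iff]; split_ifs <;> omega⟩
  by_cases c3 : 1 ≤ n
  · exact ⟨(3 * k - n).toNat, by omega, by simp only [hexRing, Prod.ext_iff]; split_ifs <;> omega⟩
  by_cases c4 : m ≤ -1
  · exact ⟨(3 * k - n).toNat, by omega, by simp only [hexRing, Prod.ext_iff]; split_ifs <;> omega⟩
  by_cases c5 : m + n ≤ -1
  · exact ⟨(4 * k + m).toNat, by omega, by simp only [hexRing, Prod.ext_iff]; split_ifs <;> omega⟩
  · exact ⟨(6 * k + n).toNat, by omega, by simp only [hexRing, Prod.ext_iff]; split_ifs <;> omega⟩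

/-- A unit step along which `hexNorm` grows by one and the distance to the origin does not
decrease. -/
def outwardDir (z : ℤ × ℤ) : ℤ × ℤ :=
  if 1 ≤ z.1 ∧ 0 ≤ z.2 then (1, 0)
  else if 1 ≤ z.2 ∧ 1 ≤ z.1 + z.2 then (0, 1)
  else if 1 ≤ z.2 then (-1, 0)
  else if z.1 ≤ -1 ∧ z.1 + z.2 ≤ -1 then (-1, 0)
  else if z.2 ≤ -1 ∧ z.1 + z.2 ≤ -1 then (0, -1)
  else (1, 0)

def ray (z e : ℤ × ℤ) (t : ℕ) : ℤ × ℤ := (z.1 + t * e.1, z.2 + t * e.2)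

lemma ray_zero (z e : ℤ × ℤ) : ray z e 0 = z := by simp [ray]

lemma ray_succ (z e : ℤ × ℤ) (t : ℕ) : ray z e (t + 1) = ray z e t + e := by
  simp only [ray, Prod.ext_iff, Prod.fst_add, Prod.snd_add]; push_cast; constructor <;> ring

lemma outwardDir_mem_unitSteps (z : ℤ × ℤ) : outwardDir z ∈ unitSteps := by
  unfold outwardDir; split_ifs <;> simp [unitSteps]

lemma hexNorm_ray_outwardDir {z : ℤ × ℤ} (hz : 1 ≤ hexNorm z) (t : ℕ) :
    hexNorm (ray z (outwardDir z) t) = hexNorm z + t := by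
  rcases z with ⟨m, n⟩
  simp only [hexNorm, abs] at hz ⊢
  unfold outwardDir
  split_ifs <;> simp only [ray, mul_one, mul_zero, mul_neg, add_zero] <;> omega

lemma norm_pt_le_norm_pt_ray_outwardDir (z : ℤ × ℤ) (t : ℕ) :
    ‖pt z‖ ≤ ‖pt (ray z (outwardDir z) t)‖ := by
  refine (pow_le_pow_iff_left₀ (norm_nonneg _) (norm_nonneg _) two_ne_zero).mp ?_
  rw [norm_pt_sq, norm_pt_sq, add_le_add_iff_right]
  have ht : (0 : ℤ) ≤ t := by positivity
  rcases z with ⟨m, n⟩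
  norm_cast
  simp only [qform, outwardDir, ray]
  split_ifs <;>
    first
    | nlinarith [mul_nonneg ht ht, mul_nonneg ht (show (0 : ℤ) ≤ 2 * m + n + 1 by omega)]
    | nlinarith [mul_nonneg ht ht, mul_nonneg ht (show (0 : ℤ) ≤ m + 2 * n + 1 by omega)]
    | nlinarith [mul_nonneg ht ht, mul_nonneg ht (show (0 : ℤ) ≤ -(2 * m) - n - 1 by omega)]
    | nlinarith [mul_nonneg ht ht, mul_nonneg ht (show (0 : ℤ) ≤ -m - 2 * n - 1 by omega)]

def cutoffAnnulus (R : ℝ) : Set E2 := {x | 3 * R / 4 - 1 ≤ ‖x‖ ∧ ‖x‖ ≤ R + 1}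

def annulusPts (R : ℝ) : Finset (ℤ × ℤ) :=
  (Finset.Icc (-⌈2 * R⌉) ⌈2 * R⌉ ×ˢ Finset.Icc (-⌈2 * R⌉) ⌈2 * R⌉).filter
    fun z => 3 * R / 4 - 1 ≤ ‖pt z‖ ∧ ‖pt z‖ ≤ R + 1

lemma hexNorm_le_of_norm_pt_le {R : ℝ} (hR : 0 ≤ R) {z : ℤ × ℤ} (h : ‖pt z‖ ≤ R + 1) :
    (hexNorm z : ℝ) ≤ 6 * R / 5 + 2 := by
  have := three_mul_hexNorm_sq_le_norm_pt z
  nlinarith [norm_nonneg (pt z)]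

lemma mem_annulusPts {R : ℝ} (hR : 4 ≤ R) {z : ℤ × ℤ} :
    z ∈ annulusPts R ↔ pt z ∈ cutoffAnnulus R := by
  refine ⟨fun h => (Finset.mem_filter.mp h).2, fun h => Finset.mem_filter.mpr ⟨?_, h⟩⟩
  have hz : hexNorm z ≤ ⌈2 * R⌉ := by
    have := hexNorm_le_of_norm_pt_le (by linarith) h.2
    exact_mod_cast (show (hexNorm z : ℝ) ≤ ⌈2 * R⌉ by linarith [Int.le_ceil (2 * R)])
  obtain ⟨h1, h2, -⟩ := abs_le_hexNorm z
  simp only [Finset.mem_product, Finset.mem_Icc]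
  constructor <;> constructor <;> linarith [abs_le.mp h1, abs_le.mp h2]

lemma card_annulusPts_le {R : ℝ} (hR : 4 ≤ R) : ((annulusPts R).card : ℝ) ≤ 25 * R ^ 2 := by
  have hcard : (annulusPts R).card ≤ _ := Finset.card_filter_le _ _
  rw [Finset.card_product, Int.card_Icc] at hcard
  set N := (⌈2 * R⌉ + 1 - -⌈2 * R⌉).toNat
  have hN : (N : ℝ) ≤ 5 * R := by
    have h0 : 0 ≤ ⌈2 * R⌉ := Int.ceil_nonneg (by linarith)
    have h1 : (⌈2 * R⌉ : ℝ) < 2 * R + 1 := Int.ceil_lt_add_one _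
    rw [← Int.cast_natCast, Int.toNat_of_nonneg (by omega)]
    push_cast
    linarith
  calc ((annulusPts R).card : ℝ) ≤ N * N := by exact_mod_cast hcard
    _ ≤ (5 * R) * (5 * R) := mul_le_mul hN hN (by positivity) (by positivity)
    _ = 25 * R ^ 2 := by ring

lemma one_le_hexNorm_of_mem_annulusPts {R : ℝ} (hR : 4 ≤ R) {z : ℤ × ℤ}
    (hz : z ∈ annulusPts R) : 1 ≤ hexNorm z := by
  have h1 := ((mem_annulusPts hR).mp hz).1
  have h2 := norm_pt_le_hexNorm z
  exact_mod_cast (show (1 : ℝ) ≤ hexNorm z by linarith)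

lemma ray_bond_mem_OuterBonds {R : ℝ} (hR : 4 ≤ R) {z : ℤ × ℤ} (hz : z ∈ annulusPts R)
    (t : ℕ) :
    (pt (ray z (outwardDir z) t), pt (ray z (outwardDir z) (t + 1))) ∈ OuterBonds R := by
  refine mem_OuterBonds_of_le_norm ?_ ?_
  · rw [ray_succ]; exact pt_pt_add_mem_Bonds _ (outwardDir_mem_unitSteps z)
  · have h1 := ((mem_annulusPts hR).mp hz).1
    have h2 := norm_pt_le_norm_pt_ray_outwardDir z t
    dsimp only
    linarith

lemma ring_bond_mem_OuterBonds {R : ℝ} (hR : 0 ≤ R) {k i : ℕ} (hk : 6 * R / 5 + 3 ≤ k)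
    (hi : i < 6 * k) : (pt (hexRing k i), pt (hexRing k (i + 1))) ∈ OuterBonds R := by
  refine mem_OuterBonds_of_le_norm ?_ ?_
  · simpa using pt_pt_add_mem_Bonds (hexRing k i) (hexRing_succ_sub_mem_unitSteps hi)
  · have h := three_mul_hexNorm_sq_le_norm_pt (hexRing k i)
    rw [hexNorm_hexRing hi.le] at h
    push_cast at h
    dsimp only
    nlinarith [norm_nonneg (pt (hexRing k i))]

def ringEnergy (u : E2 → ℝ) (k : ℕ) : ℝ :=
  ∑ i ∈ Finset.range (6 * k), (u (pt (hexRing k (i + 1))) - u (pt (hexRing k i))) ^ 2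

def rayEnergy (u : E2 → ℝ) (k : ℕ) (z : ℤ × ℤ) : ℝ :=
  ∑ t ∈ Finset.range k,
    (u (pt (ray z (outwardDir z) (t + 1))) - u (pt (ray z (outwardDir z) t))) ^ 2

section Poincare

variable {R : ℝ} {u : E2 → ℝ}

lemma sum_ringEnergy_le (hR : 0 ≤ R)
    (hu : Summable fun b : OuterBonds R => (u (b : E2 × E2).2 - u (b : E2 × E2).1) ^ 2)
    (W : Finset ℕ) (hW : ∀ k ∈ W, 6 * R / 5 + 3 ≤ k) :
    ∑ k ∈ W, ringEnergy u k ≤ bondEnergy u (OuterBonds R) := by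
  classical
  let bond : (_ : ℕ) × ℕ → E2 × E2 := fun σ => (pt (hexRing σ.1 σ.2), pt (hexRing σ.1 (σ.2 + 1)))
  let D := W.sigma fun k => Finset.range (6 * k)
  have hinj : ∀ σ ∈ D, ∀ τ ∈ D, bond σ = bond τ → σ = τ := by
    rintro ⟨k, i⟩ hσ ⟨l, j⟩ hτ h
    simp only [D, Finset.mem_sigma, Finset.mem_range] at hσ hτ
    have hij := pt_injective (Prod.ext_iff.mp h).1
    have hkl : k = l := by
      exact_mod_cast (hexNorm_hexRing hσ.2.le).symm.trans (hij ▸ hexNorm_hexRing hτ.2.le)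
    subst hkl
    rw [hexRing_injOn hσ.2 hτ.2 hij]
  calc ∑ k ∈ W, ringEnergy u k
      = ∑ p ∈ D.image bond, (u p.2 - u p.1) ^ 2 := by
        rw [Finset.sum_image hinj, Finset.sum_sigma]; rfl
    _ ≤ bondEnergy u (OuterBonds R) := by
        refine sum_le_bondEnergy hu _ fun p hp => ?_
        obtain ⟨⟨k, i⟩, hσ, rfl⟩ := Finset.mem_image.mp hp
        simp only [D, Finset.mem_sigma, Finset.mem_range] at hσ
        exact ring_bond_mem_OuterBonds hR (hW k hσ.1) hσ.2

lemma exists_ringEnergy_le (hR : 4 ≤ R)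
    (hu : Summable fun b : OuterBonds R => (u (b : E2 × E2).2 - u (b : E2 × E2).1) ^ 2) :
    ∃ k : ℕ, 6 * R / 5 + 3 ≤ k ∧ k ≤ 4 * R ∧ ringEnergy u k ≤ bondEnergy u (OuterBonds R) / R := by
  set E := bondEnergy u (OuterBonds R)
  set k₀ := ⌈6 * R / 5⌉₊ + 3
  have hk₀ : 6 * R / 5 + 3 ≤ k₀ := by push_cast [k₀]; linarith [Nat.le_ceil (6 * R / 5)]
  have hk₀' : (k₀ : ℝ) < 6 * R / 5 + 4 := by
    push_cast [k₀]; linarith [Nat.ceil_lt_add_one (show 0 ≤ 6 * R / 5 by linarith)]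
  have hRc : (⌈R⌉₊ : ℝ) < R + 1 := Nat.ceil_lt_add_one (by linarith)
  let W := Finset.Ico k₀ (k₀ + ⌈R⌉₊)
  have hW : W.Nonempty := Finset.nonempty_Ico.mpr (by simp [Nat.ceil_pos]; linarith)
  have hsum : ∑ k ∈ W, ringEnergy u k ≤ ∑ _k ∈ W, E / R := by
    rw [Finset.sum_const, Nat.card_Ico, add_tsub_cancel_left, nsmul_eq_mul]
    calc ∑ k ∈ W, ringEnergy u k ≤ E := by
          refine sum_ringEnergy_le (by linarith) hu W fun k hk => ?_
          exact hk₀.trans (by exact_mod_cast (Finset.mem_Ico.mp hk).1)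
      _ ≤ ⌈R⌉₊ * (E / R) := by
          rw [mul_div_assoc', le_div_iff₀ (by linarith), mul_comm]
          exact mul_le_mul_of_nonneg_right (Nat.le_ceil R) (bondEnergy_nonneg _ _)
  obtain ⟨k, hk, hkE⟩ := Finset.exists_le_of_sum_le hW hsum
  obtain ⟨hk1, hk2⟩ := Finset.mem_Ico.mp hk
  have hk2' : (k : ℝ) < k₀ + ⌈R⌉₊ := by exact_mod_cast hk2
  exact ⟨k, hk₀.trans (by exact_mod_cast hk1), by linarith, hkE⟩

lemma sum_rayEnergy_le (hR : 4 ≤ R)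
    (hu : Summable fun b : OuterBonds R => (u (b : E2 × E2).2 - u (b : E2 × E2).1) ^ 2)
    (k : ℕ) : ∑ z ∈ annulusPts R, rayEnergy u k z ≤ k * bondEnergy u (OuterBonds R) := by
  classical
  let bond : (ℤ × ℤ) × ℕ → E2 × E2 := fun σ =>
    (pt (ray σ.1 (outwardDir σ.1) σ.2), pt (ray σ.1 (outwardDir σ.1) (σ.2 + 1)))
  let D := annulusPts R ×ˢ Finset.range k
  -- a bond and the position `t` along the ray determine the ray's starting point
  have hfiber : ∀ p, (D.filter (bond · = p)).card ≤ k := by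
    intro p
    refine (Finset.card_le_card_of_injOn Prod.snd (fun σ hσ => ?_) ?_).trans
      (Finset.card_range k).le
    · exact (Finset.mem_product.mp (Finset.mem_filter.mp hσ).1).2
    rintro ⟨z, t⟩ hσ ⟨w, s⟩ hτ (rfl : t = s)
    have h := (Finset.mem_filter.mp hσ).2.trans (Finset.mem_filter.mp hτ).2.symm
    have h1 := pt_injective (Prod.ext_iff.mp h).1
    have h2 := pt_injective (Prod.ext_iff.mp h).2
    rw [ray_succ, ray_succ, h1, add_right_inj] at h2
    simp only [ray, h2, Prod.mk.injEq, add_left_inj] at h1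
    exact Prod.ext (Prod.ext h1.1 h1.2) rfl
  calc ∑ z ∈ annulusPts R, rayEnergy u k z
      = ∑ σ ∈ D, (u (bond σ).2 - u (bond σ).1) ^ 2 := by
        rw [Finset.sum_product]; rfl
    _ ≤ k * ∑ p ∈ D.image bond, (u p.2 - u p.1) ^ 2 :=
        sum_comp_le_mul_sum_image D bond (f := fun p => (u p.2 - u p.1) ^ 2)
          (fun _ => sq_nonneg _) hfiber
    _ ≤ k * bondEnergy u (OuterBonds R) := by
        refine mul_le_mul_of_nonneg_left (sum_le_bondEnergy hu _ fun p hp => ?_) (by positivity)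
        obtain ⟨⟨z, t⟩, hσ, rfl⟩ := Finset.mem_image.mp hp
        exact ray_bond_mem_OuterBonds hR (Finset.mem_product.mp hσ).1 t

/-- Join `z` to the ring `k` along its outward ray, then follow the ring back to its base point. -/
lemma sq_sub_hexRing_zero_le (hR : 4 ≤ R) {z : ℤ × ℤ} (hz : z ∈ annulusPts R) {k : ℕ}
    (hk : 6 * R / 5 + 3 ≤ k) :
    (u (pt z) - u (pt (hexRing k 0))) ^ 2 ≤ 2 * k * rayEnergy u k z + 12 * k * ringEnergy u k := by
  have h1 := one_le_hexNorm_of_mem_annulusPts hR hz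
  have h2 : hexNorm z < k := by
    have := hexNorm_le_of_norm_pt_le (by linarith) ((mem_annulusPts hR).mp hz).2
    exact_mod_cast (show (hexNorm z : ℝ) < k by linarith)
  set T := k - (hexNorm z).toNat
  set zT := ray z (outwardDir z) T
  obtain ⟨i, hi, hzT⟩ : ∃ i < 6 * k, hexRing k i = zT :=
    exists_hexRing_eq (by omega) (by rw [hexNorm_ray_outwardDir h1]; omega)
  have hray : (u (pt zT) - u (pt z)) ^ 2 ≤ k * rayEnergy u k z := by
    simpa [ray_zero, rayEnergy] using
      sq_sub_le_mul_sum_sq_of_le (fun t => u (pt (ray z (outwardDir z) t))) (n := T) (N := k)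
        (by omega)
  have hring : (u (pt zT) - u (pt (hexRing k 0))) ^ 2 ≤ 6 * k * ringEnergy u k := by
    simpa [hzT, ringEnergy] using
      sq_sub_le_mul_sum_sq_of_le (fun i => u (pt (hexRing k i))) (n := i) (N := 6 * k) hi.le
  nlinarith [sq_nonneg (u (pt z) + u (pt (hexRing k 0)) - 2 * u (pt zT))]

theorem exists_sum_sq_sub_le (hR : 4 ≤ R)
    (hu : Summable fun b : OuterBonds R => (u (b : E2 × E2).2 - u (b : E2 × E2).1) ^ 2) :
    ∃ a, ∑ z ∈ annulusPts R, (u (pt z) - a) ^ 2 ≤ 1250 * R ^ 2 * bondEnergy u (OuterBonds R) := by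
  set E := bondEnergy u (OuterBonds R)
  obtain ⟨k, hk, hkR, hring⟩ := exists_ringEnergy_le hR hu
  refine ⟨u (pt (hexRing k 0)), ?_⟩
  have hE := bondEnergy_nonneg u (OuterBonds R)
  have hcard := card_annulusPts_le hR
  have hray := sum_rayEnergy_le hR hu k
  have hring' : R * ringEnergy u k ≤ E := by
    rwa [le_div_iff₀ (by linarith), mul_comm] at hring
  have hring0 : 0 ≤ ringEnergy u k := Finset.sum_nonneg fun _ _ => sq_nonneg _
  calc ∑ z ∈ annulusPts R, (u (pt z) - u (pt (hexRing k 0))) ^ 2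
      ≤ ∑ z ∈ annulusPts R, (2 * k * rayEnergy u k z + 12 * k * ringEnergy u k) :=
        Finset.sum_le_sum fun z hz => sq_sub_hexRing_zero_le hR hz hk
    _ = 2 * k * ∑ z ∈ annulusPts R, rayEnergy u k z
          + (annulusPts R).card * (12 * k * ringEnergy u k) := by
        rw [Finset.sum_add_distrib, Finset.mul_sum, Finset.sum_const, nsmul_eq_mul]
    _ ≤ 2 * k * (k * E) + 25 * R ^ 2 * (12 * k * ringEnergy u k) := by
        gcongr
    _ ≤ 1250 * R ^ 2 * E := by
        -- `2 k² ≤ 32 R²` and `25 R² · 12 k / R ≤ 1200 R²`, as `k ≤ 4 R` and `R · ringEnergy ≤ E`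
        nlinarith [mul_le_mul_of_nonneg_left hring' (show (0 : ℝ) ≤ 300 * R * k by positivity),
          mul_le_mul_of_nonneg_right hkR hE]

end Poincare

/-- `truncationDefect η R a u (ξ, ξ')` is the bond difference of `Π_R u - u` across `(ξ, ξ')`,
where `Π_R u = η(·/R) (u - a)`. -/
def truncationDefect (η : E2 → ℝ) (R a : ℝ) (u : E2 → ℝ) (p : E2 × E2) : ℝ :=
  (η (R⁻¹ • p.2) * (u p.2 - a) - η (R⁻¹ • p.1) * (u p.1 - a)) - (u p.2 - u p.1)

section Truncation

variable {η : E2 → ℝ} {C₀ R : ℝ}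

lemma sq_truncationDefect_le (hlip : ∀ x y : E2, |η x - η y| ≤ C₀ * ‖x - y‖)
    (hη1 : ∀ x ∈ ball (0 : E2) (3 / 4), η x = 1) (hη0 : ∀ x : E2, x ∉ ball (0 : E2) 1 → η x = 0)
    (hR : 0 < R) (u : E2 → ℝ) (a : ℝ) {p : E2 × E2} (hp : p ∈ Bonds) :
    truncationDefect η R a u p ^ 2 ≤
      2 * max 1 C₀ ^ 2 * (OuterBonds R).indicator (fun p => (u p.2 - u p.1) ^ 2) p
        + 2 * (C₀ / R) ^ 2 * (cutoffAnnulus R).indicator (fun x => (u x - a) ^ 2) p.1 := by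
  have hlen : ‖p.2‖ ≤ ‖p.1‖ + 1 ∧ ‖p.1‖ ≤ ‖p.2‖ + 1 := by
    have := abs_norm_sub_norm_le p.2 p.1
    rw [hp.2.2] at this
    constructor <;> linarith [abs_le.mp this]
  have hgrad : ((η (R⁻¹ • p.2) - 1) * (u p.2 - u p.1)) ^ 2 ≤
      max 1 C₀ ^ 2 * (OuterBonds R).indicator (fun p => (u p.2 - u p.1) ^ 2) p := by
    by_cases hO : p ∈ OuterBonds R
    · have h := pow_le_pow_left₀ (abs_nonneg _)
        (abs_cutoff_sub_one_le hlip (hη1 0 (mem_ball_self (by norm_num))) hη0 (R⁻¹ • p.2)) 2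
      rw [sq_abs] at h
      rw [Set.indicator_of_mem hO, mul_pow]
      exact mul_le_mul_of_nonneg_right h (sq_nonneg _)
    · have h2 : ‖p.2‖ < R / 2 := by
        by_contra h
        exact hO ⟨hp, Or.inr (by simpa using h)⟩
      rw [Set.indicator_of_notMem hO, cutoff_smul_eq_one hη1 hR (x := p.2) (by linarith)]
      simp
  have hcut : ((η (R⁻¹ • p.2) - η (R⁻¹ • p.1)) * (u p.1 - a)) ^ 2 ≤
      (C₀ / R) ^ 2 * (cutoffAnnulus R).indicator (fun x => (u x - a) ^ 2) p.1 := by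
    by_cases hA : p.1 ∈ cutoffAnnulus R
    · have h := abs_cutoff_smul_sub_le hlip hR p.1 p.2
      rw [hp.2.2, mul_one] at h
      have h' := pow_le_pow_left₀ (abs_nonneg _) h 2
      rw [sq_abs] at h'
      rw [Set.indicator_of_mem hA, mul_pow]
      exact mul_le_mul_of_nonneg_right h' (sq_nonneg _)
    · have hη : η (R⁻¹ • p.2) = η (R⁻¹ • p.1) := by
        rcases not_and_or.mp hA with h | h
        · rw [cutoff_smul_eq_one hη1 hR (x := p.1) (by linarith),
            cutoff_smul_eq_one hη1 hR (x := p.2) (by linarith)]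
        · rw [cutoff_smul_eq_zero hη0 hR (x := p.1) (by linarith),
            cutoff_smul_eq_zero hη0 hR (x := p.2) (by linarith)]
      rw [Set.indicator_of_notMem hA, hη]
      simp
  have hsplit : truncationDefect η R a u p = (η (R⁻¹ • p.2) - 1) * (u p.2 - u p.1)
      + (η (R⁻¹ • p.2) - η (R⁻¹ • p.1)) * (u p.1 - a) := by
    simp only [truncationDefect]; ring
  rw [hsplit]
  nlinarith [sq_nonneg ((η (R⁻¹ • p.2) - 1) * (u p.2 - u p.1)
    - (η (R⁻¹ • p.2) - η (R⁻¹ • p.1)) * (u p.1 - a))]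

/-- Each lattice point is the first endpoint of six bonds. -/
lemma sum_indicator_cutoffAnnulus_le (hR : 4 ≤ R) {f : E2 → ℝ} (hf : ∀ x, 0 ≤ f x)
    (F : Finset Bonds) :
    ∑ b ∈ F, (cutoffAnnulus R).indicator f (b : E2 × E2).1 ≤ 6 * ∑ z ∈ annulusPts R, f (pt z) := by
  classical
  let bond : (ℤ × ℤ) × (ℤ × ℤ) → E2 × E2 := fun w => (pt w.1, pt (w.1 + w.2))
  have hsub : (F.map (Function.Embedding.subtype _)).filter (·.1 ∈ cutoffAnnulus R) ⊆
      (annulusPts R ×ˢ unitSteps).image bond := by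
    intro p hp
    obtain ⟨hpF, hpA⟩ := Finset.mem_filter.mp hp
    obtain ⟨b, -, rfl⟩ := Finset.mem_map.mp hpF
    obtain ⟨z, e, he, hb⟩ := exists_eq_pt_pt_add_of_mem_Bonds b.2
    simp only [Function.Embedding.coe_subtype, hb] at hpA ⊢
    exact Finset.mem_image.mpr
      ⟨(z, e), Finset.mem_product.mpr ⟨(mem_annulusPts hR).mpr hpA, he⟩, rfl⟩
  calc ∑ b ∈ F, (cutoffAnnulus R).indicator f (b : E2 × E2).1
      = ∑ p ∈ (F.map (Function.Embedding.subtype _)).filter (·.1 ∈ cutoffAnnulus R), f p.1 := by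
        rw [Finset.sum_filter, Finset.sum_map]; rfl
    _ ≤ ∑ p ∈ (annulusPts R ×ˢ unitSteps).image bond, f p.1 :=
        Finset.sum_le_sum_of_subset_of_nonneg hsub fun _ _ _ => hf _
    _ ≤ ∑ w ∈ annulusPts R ×ˢ unitSteps, f (bond w).1 :=
        Finset.sum_image_le_of_nonneg fun _ _ => hf _
    _ = 6 * ∑ z ∈ annulusPts R, f (pt z) := by
        rw [Finset.sum_product, Finset.mul_sum]
        simp [bond, unitSteps]

theorem tsum_sq_truncationDefect_le (hlip : ∀ x y : E2, |η x - η y| ≤ C₀ * ‖x - y‖)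
    (hη1 : ∀ x ∈ ball (0 : E2) (3 / 4), η x = 1) (hη0 : ∀ x : E2, x ∉ ball (0 : E2) 1 → η x = 0)
    (hR : 4 ≤ R) {u : E2 → ℝ}
    (hu : Summable fun b : OuterBonds R => (u (b : E2 × E2).2 - u (b : E2 × E2).1) ^ 2) (a : ℝ) :
    ∑' b : Bonds, truncationDefect η R a u b ^ 2 ≤
      2 * max 1 C₀ ^ 2 * bondEnergy u (OuterBonds R)
        + 12 * (C₀ / R) ^ 2 * ∑ z ∈ annulusPts R, (u (pt z) - a) ^ 2 := by
  have hE := bondEnergy_nonneg u (OuterBonds R)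
  have hS : 0 ≤ ∑ z ∈ annulusPts R, (u (pt z) - a) ^ 2 := Finset.sum_nonneg fun _ _ => sq_nonneg _
  refine tsum_le_of_sum_le' (by positivity) fun F => ?_
  calc ∑ b ∈ F, truncationDefect η R a u b ^ 2
      ≤ ∑ b ∈ F, (2 * max 1 C₀ ^ 2 * (OuterBonds R).indicator (fun p => (u p.2 - u p.1) ^ 2) b
          + 2 * (C₀ / R) ^ 2 * (cutoffAnnulus R).indicator (fun x => (u x - a) ^ 2) b.1.1) :=
        Finset.sum_le_sum fun b _ => sq_truncationDefect_le hlip hη1 hη0 (by linarith) u a b.2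
    _ = 2 * max 1 C₀ ^ 2 * ∑ b ∈ F, (OuterBonds R).indicator (fun p => (u p.2 - u p.1) ^ 2) b
          + 2 * (C₀ / R) ^ 2 *
            ∑ b ∈ F, (cutoffAnnulus R).indicator (fun x => (u x - a) ^ 2) b.1.1 := by
        rw [Finset.sum_add_distrib, Finset.mul_sum, Finset.mul_sum]
    _ ≤ 2 * max 1 C₀ ^ 2 * bondEnergy u (OuterBonds R)
          + 2 * (C₀ / R) ^ 2 * (6 * ∑ z ∈ annulusPts R, (u (pt z) - a) ^ 2) := by
        gcongr
        · have h := sum_indicator_le_bondEnergy hu (F.map (Function.Embedding.subtype _))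
          rwa [Finset.sum_map] at h
        · exact sum_indicator_cutoffAnnulus_le hR (fun _ => sq_nonneg _) F
    _ = _ := by ring

end Truncation

end TriangularLattice

open TriangularLattice

/-- Truncation operator estimate: Π_R u(ξ) = η(ξ/R)(u(ξ) − a_R) agrees with u (up to the
constant shift) on bonds inside B_{R/2}, and ‖DΠ_R u − Du‖²_{ℓ²} ≤ γ ‖Du‖²_{ℓ²(B∖B_{R/2})}
with γ independent of R and u. -/
theorem stmt15 (η : E2 → ℝ) (C₀ : ℝ) (hη : ContDiff ℝ 1 η)
    (hη1 : ∀ x ∈ ball (0 : E2) (3 / 4), η x = 1)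
    (hη0 : ∀ x : E2, x ∉ ball (0 : E2) 1 → η x = 0)
    (hηd : ∀ x : E2, ‖fderiv ℝ η x‖ ≤ C₀) :
    ∃ γ : ℝ, 0 < γ ∧
      ∀ R : ℝ, 4 ≤ R →
      ∀ u : E2 → ℝ,
      Summable (fun b : Bonds => (u (b : E2 × E2).2 - u (b : E2 × E2).1) ^ 2) →
      ∃ aR : ℝ,
        (∀ b ∈ Bonds, b.1 ∈ ball (0 : E2) (R / 2) → b.2 ∈ ball (0 : E2) (R / 2) →
          (η (R⁻¹ • b.2) * (u b.2 - aR) - η (R⁻¹ • b.1) * (u b.1 - aR)) =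
            u b.2 - u b.1) ∧
        (∑' b : Bonds,
            ((η (R⁻¹ • (b : E2 × E2).2) * (u (b : E2 × E2).2 - aR) -
              η (R⁻¹ • (b : E2 × E2).1) * (u (b : E2 × E2).1 - aR)) -
             (u (b : E2 × E2).2 - u (b : E2 × E2).1)) ^ 2) ≤
          γ * ∑' b : OuterBonds R, (u (b : E2 × E2).2 - u (b : E2 × E2).1) ^ 2 := by
  have hlip : ∀ x y : E2, |η x - η y| ≤ C₀ * ‖x - y‖ := fun x y => by
    simpa [Real.norm_eq_abs] using convex_univ.norm_image_sub_le_of_norm_fderiv_le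
      (fun z _ => (hη.differentiable one_ne_zero).differentiableAt) (fun z _ => hηd z)
      (Set.mem_univ y) (Set.mem_univ x)
  refine ⟨2 * max 1 C₀ ^ 2 + 15000 * C₀ ^ 2, by positivity, fun R hR u hsum => ?_⟩
  have hR0 : 0 < R := by linarith
  have hu : Summable fun b : OuterBonds R => (u (b : E2 × E2).2 - u (b : E2 × E2).1) ^ 2 := by
    have h := hsum.comp_injective
      (Set.inclusion_injective (fun _ hp => hp.1 : OuterBonds R ⊆ Bonds))
    exact h
  obtain ⟨a, ha⟩ := exists_sum_sq_sub_le hR hu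
  refine ⟨a, fun b _ h1 h2 => ?_, ?_⟩
  · rw [mem_ball_zero_iff] at h1 h2
    rw [cutoff_smul_eq_one hη1 hR0 (by linarith), cutoff_smul_eq_one hη1 hR0 (by linarith)]
    ring
  · calc _ ≤ 2 * max 1 C₀ ^ 2 * bondEnergy u (OuterBonds R)
          + 12 * (C₀ / R) ^ 2 * ∑ z ∈ annulusPts R, (u (pt z) - a) ^ 2 :=
          tsum_sq_truncationDefect_le hlip hη1 hη0 hR hu a
      _ ≤ 2 * max 1 C₀ ^ 2 * bondEnergy u (OuterBonds R)
          + 12 * (C₀ / R) ^ 2 * (1250 * R ^ 2 * bondEnergy u (OuterBonds R)) := by gcongr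
      _ = (2 * max 1 C₀ ^ 2 + 15000 * C₀ ^ 2) * bondEnergy u (OuterBonds R) := by
          field_simp; ring

end
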